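/- Let S have Laplace density (λ/2)e^{−λ|s|} with λ > 0, E ∼ N(0, N_T) independent of S, X = S + E, and Z ∼ N(0, τ) independent of (S, E) with τ > 0. Then the posterior mean of X given the observation ẑ = X + Z equals F(ẑ, τ) = ẑ + λτ·η(ẑ, τ) where η(ẑ, τ) = (erfcx(α) − erfcx(β))/(erfcx(α) + erfcx(β)), α = (ẑ + λ(N_T + τ))/√(2(N_T + τ)), β = (−ẑ + λ(N_T + τ))/√(2(N_T + τ)). -/

import Mathlib

open MeasureTheory Real

/-- The standard Gaussian tail (complementary CDF) function. -/
noncomputable def gaussQ (x : ℝ) : ℝ :=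
  ∫ t in Set.Ioi x, (Real.sqrt (2 * Real.pi))⁻¹ * Real.exp (-(t ^ 2) / 2)

/-- Complementary error function `erfc(t) = 2 Q(√2 t)`. -/
noncomputable def erfc (t : ℝ) : ℝ := 2 * gaussQ (Real.sqrt 2 * t)

/-- Scaled complementary error function `erfcx(t) = e^{t²} erfc(t)`. -/
noncomputable def erfcx (t : ℝ) : ℝ := Real.exp (t ^ 2) * erfc t

/-- The Laplace–Gaussian convolution density of `X = S + E` (closed form). -/
noncomputable def laplaceGaussDensity (lam NT x : ℝ) : ℝ :=
  lam / 2 * Real.exp (lam ^ 2 * NT / 2) *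
    (Real.exp (lam * x) * gaussQ ((x + lam * NT) / Real.sqrt NT)
      + Real.exp (-lam * x) * (1 - gaussQ ((x - lam * NT) / Real.sqrt NT)))

/-- The ratio `η` appearing in the AMPI posterior mean. -/
noncomputable def etaFun (lam NT τ zhat : ℝ) : ℝ :=
  (erfcx ((zhat + lam * (NT + τ)) / Real.sqrt (2 * (NT + τ)))
    - erfcx ((-zhat + lam * (NT + τ)) / Real.sqrt (2 * (NT + τ))))
  / (erfcx ((zhat + lam * (NT + τ)) / Real.sqrt (2 * (NT + τ)))
      + erfcx ((-zhat + lam * (NT + τ)) / Real.sqrt (2 * (NT + τ))))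

/-!
The closed form `laplaceGaussDensity λ v` is the convolution of the Laplace density with the
centred Gaussian of variance `v`: on each half-line, exponential tilting turns `e^{-λs}` times a
Gaussian density into a shifted Gaussian density, whose tail is a `gaussQ` (`gaussLaplaceIoi`).
Against the likelihood of `ẑ`, Fubini lets one integrate out `x` first, and the product of two
Gaussian densities factors into the evidence `N(s, N_T + τ)` at `ẑ` times a Gaussian in `x` with
mean `(τ s + N_T ẑ) / (N_T + τ)`. So the denominator is `laplaceGaussDensity λ (N_T + τ) ẑ`, and the
numerator reduces to the first moment of the Laplace density against `N(ẑ, N_T + τ)`, which the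
same tilting computes (the boundary terms of the two half-lines cancel). Finally `erfcx α` and
`erfcx β` are `2 e^{ẑ² / 2(N_T + τ)}` times the two half-line transforms, and this factor cancels
in `η`.
-/

open Set Filter ProbabilityTheory
open scoped NNReal

namespace LaplaceGaussPosterior

section Gaussian

variable {v : ℝ≥0}

lemma gaussianPDFReal_comm (μ : ℝ) (v : ℝ≥0) (x : ℝ) :
    gaussianPDFReal μ v x = gaussianPDFReal x v μ := by
  simp only [gaussianPDFReal_def]; ring_nf

lemma gaussianPDFReal_neg_neg (μ : ℝ) (v : ℝ≥0) (x : ℝ) :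
    gaussianPDFReal (-μ) v (-x) = gaussianPDFReal μ v x := by
  simp only [gaussianPDFReal_def]; ring_nf

lemma integrable_mul_gaussianPDFReal (μ : ℝ) (v : ℝ≥0) :
    Integrable fun x => x * gaussianPDFReal μ v x := by
  rcases eq_or_ne v 0 with rfl | hv
  · simp
  have h := (memLp_id_gaussianReal (μ := μ) (v := v) 1).integrable le_rfl
  rw [gaussianReal_of_var_ne_zero _ hv, integrable_withDensity_iff_integrable_smul'
    (measurable_gaussianPDF μ v) (Eventually.of_forall fun _ => gaussianPDF_lt_top)] at h
  simpa [mul_comm] using h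

lemma integral_mul_gaussianPDFReal (μ : ℝ) (hv : v ≠ 0) :
    ∫ x, x * gaussianPDFReal μ v x = μ := by
  simpa [mul_comm, integral_gaussianReal_eq_integral_smul hv] using
    integral_id_gaussianReal (μ := μ) (v := v)

lemma setIntegral_Ioi_comp_sub (f : ℝ → ℝ) (a c : ℝ) :
    ∫ x in Ioi a, f (x - c) = ∫ x in Ioi (a - c), f x := by
  simpa only [preimage_sub_const_Ioi, sub_add_cancel] using
    (measurePreserving_sub_right volume c).setIntegral_preimage_emb
      (measurableEmbedding_subRight c) f (Ioi (a - c))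

lemma gaussQ_eq_setIntegral (x : ℝ) : gaussQ x = ∫ t in Ioi x, gaussianPDFReal 0 1 t := by
  simp [gaussQ, gaussianPDFReal_def]

lemma setIntegral_Ioi_gaussianPDFReal (μ : ℝ) (hv : v ≠ 0) (a : ℝ) :
    ∫ x in Ioi a, gaussianPDFReal μ v x = gaussQ ((a - μ) / √v) := by
  have hs : 0 < √(v : ℝ) := by positivity
  have hscale : ∀ x, gaussianPDFReal μ v x = (√v)⁻¹ * gaussianPDFReal 0 1 ((√v)⁻¹ * (x - μ)) := by
    intro x
    simp only [gaussianPDFReal_def, NNReal.coe_one, mul_one, sub_zero, mul_pow, inv_pow,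
      sq_sqrt v.coe_nonneg, sqrt_mul' _ v.coe_nonneg]
    field_simp
  simp_rw [hscale, integral_const_mul]
  rw [setIntegral_Ioi_comp_sub (fun y => gaussianPDFReal 0 1 ((√v)⁻¹ * y)),
    integral_comp_mul_left_Ioi _ _ (inv_pos.mpr hs), gaussQ_eq_setIntegral, smul_eq_mul, inv_inv,
    inv_mul_cancel_left₀ hs.ne', inv_mul_eq_div]

lemma gaussQ_pos (x : ℝ) : 0 < gaussQ x := by
  have hsupp : Function.support (gaussianPDFReal 0 1) = univ :=
    eq_univ_of_forall fun t => (gaussianPDFReal_pos 0 1 t one_ne_zero).ne'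
  rw [gaussQ_eq_setIntegral, setIntegral_pos_iff_support_of_nonneg_ae
    (Eventually.of_forall (gaussianPDFReal_nonneg 0 1))
    (integrable_gaussianPDFReal 0 1).integrableOn, hsupp, univ_inter, volume_Ioi]
  exact ENNReal.zero_lt_top

lemma gaussQ_neg (x : ℝ) : gaussQ (-x) = 1 - gaussQ x := by
  have heven (t : ℝ) : gaussianPDFReal 0 1 (-t) = gaussianPDFReal 0 1 t := by
    simpa using gaussianPDFReal_neg_neg 0 1 t
  have htotal := intervalIntegral.integral_Iic_add_Ioi (b := x)
    (integrable_gaussianPDFReal 0 1).integrableOn (integrable_gaussianPDFReal 0 1).integrableOn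
  rw [integral_gaussianPDFReal_eq_one 0 one_ne_zero] at htotal
  rw [gaussQ_eq_setIntegral, gaussQ_eq_setIntegral, ← integral_comp_neg_Iic]
  simp only [heven]
  linarith

lemma integrable_sub_mul_gaussianPDFReal (μ : ℝ) (v : ℝ≥0) :
    Integrable fun x => (x - μ) * gaussianPDFReal μ v x := by
  simpa only [sub_mul] using
    (integrable_mul_gaussianPDFReal μ v).sub' ((integrable_gaussianPDFReal μ v).const_mul μ)

lemma hasDerivAt_gaussianPDFReal (μ : ℝ) (v : ℝ≥0) (x : ℝ) :
    HasDerivAt (gaussianPDFReal μ v) (-((x - μ) / v) * gaussianPDFReal μ v x) x := by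
  have hexponent : HasDerivAt (fun y => -(y - μ) ^ 2 / (2 * v)) (-((x - μ) / v)) x :=
    ((((hasDerivAt_id x).sub_const μ).pow 2).neg.div_const (2 * (v : ℝ))).congr_deriv
      (by simp only [id, Nat.cast_ofNat, mul_one]; ring)
  exact (hexponent.exp.const_mul (√(2 * π * v))⁻¹).congr_deriv (by rw [gaussianPDFReal]; ring)

lemma setIntegral_Ioi_sub_mul_gaussianPDFReal (μ : ℝ) (hv : v ≠ 0) (a : ℝ) :
    ∫ x in Ioi a, (x - μ) * gaussianPDFReal μ v x = v * gaussianPDFReal μ v a := by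
  have hderiv (x : ℝ) : HasDerivAt (fun x => -(v : ℝ) * gaussianPDFReal μ v x)
      ((x - μ) * gaussianPDFReal μ v x) x := by
    refine ((hasDerivAt_gaussianPDFReal μ v x).const_mul (-(v : ℝ))).congr_deriv ?_
    field_simp [show (v : ℝ) ≠ 0 by exact_mod_cast hv]
  have hint := integrable_sub_mul_gaussianPDFReal μ v
  have hlim : Tendsto (fun x => -(v : ℝ) * gaussianPDFReal μ v x) atTop (nhds 0) :=
    tendsto_zero_of_hasDerivAt_of_integrableOn_Ioi (a := a) (fun x _ => hderiv x)
      hint.integrableOn ((integrable_gaussianPDFReal μ v).const_mul _).integrableOn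
  rw [integral_Ioi_of_hasDerivAt_of_tendsto (hderiv a).continuousAt.continuousWithinAt
    (fun x _ => hderiv x) hint.integrableOn hlim]
  ring

lemma exp_neg_mul_mul_gaussianPDFReal (c μ : ℝ) (hv : v ≠ 0) (x : ℝ) :
    exp (-(c * x)) * gaussianPDFReal μ v x
      = exp (c ^ 2 * v / 2 - c * μ) * gaussianPDFReal (μ - c * v) v x := by
  simp only [gaussianPDFReal_def]
  rw [mul_left_comm, ← exp_add, mul_left_comm, ← exp_add]
  congr 2
  field_simp
  ring

noncomputable def gaussLaplaceIoi (c v μ : ℝ) : ℝ :=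
  exp (c ^ 2 * v / 2 - c * μ) * gaussQ ((c * v - μ) / √v)

lemma gaussLaplaceIoi_pos (c v μ : ℝ) : 0 < gaussLaplaceIoi c v μ :=
  mul_pos (exp_pos _) (gaussQ_pos _)

lemma setIntegral_Ioi_exp_neg_mul_mul_gaussianPDFReal (c μ : ℝ) (hv : v ≠ 0) :
    ∫ x in Ioi 0, exp (-(c * x)) * gaussianPDFReal μ v x = gaussLaplaceIoi c v μ := by
  simp_rw [exp_neg_mul_mul_gaussianPDFReal c μ hv]
  rw [integral_const_mul, setIntegral_Ioi_gaussianPDFReal _ hv, gaussLaplaceIoi, zero_sub,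
    neg_sub]

lemma setIntegral_Ioi_mul_exp_neg_mul_mul_gaussianPDFReal (c μ : ℝ) (hv : v ≠ 0) :
    ∫ x in Ioi 0, x * (exp (-(c * x)) * gaussianPDFReal μ v x)
      = (μ - c * v) * gaussLaplaceIoi c v μ + v * gaussianPDFReal μ v 0 := by
  set m := μ - c * v
  have htilt (x : ℝ) : x * (exp (-(c * x)) * gaussianPDFReal μ v x)
      = exp (c ^ 2 * v / 2 - c * μ)
        * ((x - m) * gaussianPDFReal m v x + m * gaussianPDFReal m v x) := by
    rw [exp_neg_mul_mul_gaussianPDFReal c μ hv]; ring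
  have hint := integrable_sub_mul_gaussianPDFReal m v
  have hat0 := exp_neg_mul_mul_gaussianPDFReal c μ hv 0
  rw [mul_zero, neg_zero, exp_zero, one_mul] at hat0
  simp_rw [htilt]
  rw [integral_const_mul, integral_add hint.integrableOn
    ((integrable_gaussianPDFReal m v).const_mul m).integrableOn, integral_const_mul,
    setIntegral_Ioi_sub_mul_gaussianPDFReal m hv, setIntegral_Ioi_gaussianPDFReal m hv,
    gaussLaplaceIoi, hat0, zero_sub, neg_sub]
  ring

end Gaussian

noncomputable def laplacePDFReal (lam x : ℝ) : ℝ := lam / 2 * exp (-(lam * |x|))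

section Laplace

variable {lam : ℝ} {v : ℝ≥0}

lemma laplacePDFReal_neg (lam x : ℝ) : laplacePDFReal lam (-x) = laplacePDFReal lam x := by
  rw [laplacePDFReal, abs_neg, laplacePDFReal]

lemma continuous_laplacePDFReal (lam : ℝ) : Continuous (laplacePDFReal lam) := by
  unfold laplacePDFReal; fun_prop

lemma laplacePDFReal_nonneg (hlam : 0 ≤ lam) (x : ℝ) : 0 ≤ laplacePDFReal lam x := by
  unfold laplacePDFReal; positivity

lemma laplacePDFReal_le (hlam : 0 ≤ lam) (x : ℝ) : laplacePDFReal lam x ≤ lam / 2 :=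
  mul_le_of_le_one_right (by positivity)
    (exp_le_one_iff.mpr (neg_nonpos.mpr (mul_nonneg hlam (abs_nonneg x))))

lemma integrable_laplacePDFReal_mul (hlam : 0 ≤ lam) {f : ℝ → ℝ} (hf : Integrable f) :
    Integrable fun x => laplacePDFReal lam x * f x :=
  hf.bdd_mul (continuous_laplacePDFReal lam).aestronglyMeasurable
    (Eventually.of_forall fun x => by
      rw [norm_of_nonneg (laplacePDFReal_nonneg hlam x)]; exact laplacePDFReal_le hlam x)

lemma integrable_laplacePDFReal_mul_gaussianPDFReal (hlam : 0 ≤ lam) (v : ℝ≥0) (x : ℝ) :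
    Integrable fun s => laplacePDFReal lam s * gaussianPDFReal s v x := by
  simpa only [gaussianPDFReal_comm _ v x] using
    integrable_laplacePDFReal_mul hlam (integrable_gaussianPDFReal x v)

lemma integrable_mul_laplacePDFReal_mul_gaussianPDFReal (hlam : 0 ≤ lam) (v : ℝ≥0) (x : ℝ) :
    Integrable fun s => s * (laplacePDFReal lam s * gaussianPDFReal s v x) := by
  simpa only [gaussianPDFReal_comm _ v x, mul_left_comm] using
    integrable_laplacePDFReal_mul hlam (integrable_mul_gaussianPDFReal x v)

lemma integral_eq_setIntegral_Ioi_add_comp_neg {f : ℝ → ℝ} (hf : Integrable f) :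
    ∫ x, f x = (∫ x in Ioi 0, f x) + ∫ x in Ioi 0, f (-x) := by
  rw [← intervalIntegral.integral_Iic_add_Ioi (b := 0) hf.integrableOn hf.integrableOn, add_comm,
    integral_comp_neg_Ioi, neg_zero]

lemma laplacePDFReal_of_pos {x : ℝ} (hx : 0 < x) :
    laplacePDFReal lam x = lam / 2 * exp (-(lam * x)) := by
  rw [laplacePDFReal, abs_of_pos hx]

lemma laplaceGaussDensity_eq (lam v x : ℝ) :
    laplaceGaussDensity lam v x
      = lam / 2 * (gaussLaplaceIoi lam v x + gaussLaplaceIoi lam v (-x)) := by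
  have hQ : 1 - gaussQ ((x - lam * v) / √v) = gaussQ ((lam * v - x) / √v) := by
    rw [← gaussQ_neg, ← neg_div, neg_sub]
  rw [laplaceGaussDensity, hQ, gaussLaplaceIoi, gaussLaplaceIoi, sub_neg_eq_add, add_comm x,
    mul_neg, sub_neg_eq_add, sub_eq_add_neg (lam ^ 2 * v / 2), exp_add, exp_add, neg_mul]
  ring

lemma integral_laplacePDFReal_mul_gaussianPDFReal (hlam : 0 ≤ lam) (hv : v ≠ 0) (x : ℝ) :
    ∫ s, laplacePDFReal lam s * gaussianPDFReal s v x = laplaceGaussDensity lam v x := by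
  have hint := integrable_laplacePDFReal_mul_gaussianPDFReal hlam v x
  rw [laplaceGaussDensity_eq, integral_eq_setIntegral_Ioi_add_comp_neg hint,
    ← setIntegral_Ioi_exp_neg_mul_mul_gaussianPDFReal _ _ hv,
    ← setIntegral_Ioi_exp_neg_mul_mul_gaussianPDFReal _ _ hv, mul_add, ← integral_const_mul,
    ← integral_const_mul]
  congr 1 <;> refine setIntegral_congr_fun measurableSet_Ioi fun s hs => ?_
  · rw [laplacePDFReal_of_pos hs, gaussianPDFReal_comm]; ring
  · rw [laplacePDFReal_neg, laplacePDFReal_of_pos hs, ← gaussianPDFReal_neg_neg, neg_neg,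
      gaussianPDFReal_comm]; ring

lemma integral_mul_laplacePDFReal_mul_gaussianPDFReal (hlam : 0 ≤ lam) (hv : v ≠ 0) (x : ℝ) :
    ∫ s, s * (laplacePDFReal lam s * gaussianPDFReal s v x)
      = lam / 2 * ((x - lam * v) * gaussLaplaceIoi lam v x
          + (x + lam * v) * gaussLaplaceIoi lam v (-x)) := by
  have hint := integrable_mul_laplacePDFReal_mul_gaussianPDFReal hlam v x
  have hsym : gaussianPDFReal (-x) v 0 = gaussianPDFReal x v 0 := by
    simpa using gaussianPDFReal_neg_neg x v 0
  rw [integral_eq_setIntegral_Ioi_add_comp_neg hint]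
  have hpos : ∫ s in Ioi 0, s * (laplacePDFReal lam s * gaussianPDFReal s v x)
      = lam / 2 * ∫ s in Ioi 0, s * (exp (-(lam * s)) * gaussianPDFReal x v s) := by
    rw [← integral_const_mul]
    refine setIntegral_congr_fun measurableSet_Ioi fun s hs => ?_
    rw [laplacePDFReal_of_pos hs, gaussianPDFReal_comm]; ring
  have hneg : ∫ s in Ioi 0, -s * (laplacePDFReal lam (-s) * gaussianPDFReal (-s) v x)
      = -(lam / 2) * ∫ s in Ioi 0, s * (exp (-(lam * s)) * gaussianPDFReal (-x) v s) := by
    rw [← integral_const_mul]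
    refine setIntegral_congr_fun measurableSet_Ioi fun s hs => ?_
    rw [laplacePDFReal_neg, laplacePDFReal_of_pos hs, ← gaussianPDFReal_neg_neg, neg_neg,
      gaussianPDFReal_comm]; ring
  rw [hpos, hneg, setIntegral_Ioi_mul_exp_neg_mul_mul_gaussianPDFReal _ _ hv,
    setIntegral_Ioi_mul_exp_neg_mul_mul_gaussianPDFReal _ _ hv, hsym]
  ring

end Laplace

section Posterior

variable {lam : ℝ} {v₁ v₂ : ℝ≥0}

lemma gaussianPDFReal_mul_gaussianPDFReal (hv₁ : v₁ ≠ 0) (hv₂ : v₂ ≠ 0) (s x z : ℝ) :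
    gaussianPDFReal s v₁ x * gaussianPDFReal x v₂ z
      = gaussianPDFReal s (v₁ + v₂) z
        * gaussianPDFReal ((v₂ * s + v₁ * z) / (v₁ + v₂)) (v₁ * v₂ / (v₁ + v₂)) x := by
  have h₁ : (0 : ℝ) < v₁ := by positivity
  have h₂ : (0 : ℝ) < v₂ := by positivity
  simp only [gaussianPDFReal_def, NNReal.coe_add, NNReal.coe_mul, NNReal.coe_div]
  rw [mul_mul_mul_comm, mul_mul_mul_comm _ (exp _), ← mul_inv, ← mul_inv,
    ← sqrt_mul (by positivity), ← sqrt_mul (by positivity), ← exp_add, ← exp_add]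
  congr 1
  · congr 2
    field_simp
  · congr 1
    field_simp
    ring

lemma integral_gaussianPDFReal_mul_gaussianPDFReal (hv₁ : v₁ ≠ 0) (hv₂ : v₂ ≠ 0) (s z : ℝ) :
    ∫ x, gaussianPDFReal s v₁ x * gaussianPDFReal x v₂ z = gaussianPDFReal s (v₁ + v₂) z := by
  simp_rw [gaussianPDFReal_mul_gaussianPDFReal hv₁ hv₂]
  rw [integral_const_mul, integral_gaussianPDFReal_eq_one _ (by positivity), mul_one]

lemma integral_mul_gaussianPDFReal_mul_gaussianPDFReal (hv₁ : v₁ ≠ 0) (hv₂ : v₂ ≠ 0) (s z : ℝ) :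
    ∫ x, x * (gaussianPDFReal s v₁ x * gaussianPDFReal x v₂ z)
      = (v₂ * s + v₁ * z) / (v₁ + v₂) * gaussianPDFReal s (v₁ + v₂) z := by
  simp_rw [gaussianPDFReal_mul_gaussianPDFReal hv₁ hv₂, mul_left_comm _ (gaussianPDFReal s _ z)]
  rw [integral_const_mul, integral_mul_gaussianPDFReal _ (by positivity), mul_comm]

lemma integrable_prod_mul_gaussianPDFReal {f : ℝ → ℝ} (hf : Integrable f) (v : ℝ≥0) :
    Integrable (fun p : ℝ × ℝ => f p.1 * gaussianPDFReal p.1 v p.2) (volume.prod volume) := by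
  rcases eq_or_ne v 0 with rfl | hv
  · simp
  have hmeas : AEStronglyMeasurable (fun p : ℝ × ℝ => f p.1 * gaussianPDFReal p.1 v p.2)
      (volume.prod volume) :=
    hf.aestronglyMeasurable.comp_fst.mul (by fun_prop : Measurable fun p : ℝ × ℝ =>
      gaussianPDFReal p.1 v p.2).aestronglyMeasurable
  refine (integrable_prod_iff hmeas).mpr
    ⟨Eventually.of_forall fun x => (integrable_gaussianPDFReal x v).const_mul (f x), ?_⟩
  simpa [norm_mul, abs_of_nonneg (gaussianPDFReal_nonneg _ _ _), integral_const_mul,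
    integral_gaussianPDFReal_eq_one _ hv] using hf.norm

lemma integral_mul_laplaceGaussDensity_mul_gaussianPDFReal_swap (hlam : 0 ≤ lam) (hv₁ : v₁ ≠ 0)
    {φ : ℝ → ℝ} (hφm : Measurable φ) {z : ℝ}
    (hφ : Integrable fun x => φ x * gaussianPDFReal x v₂ z) :
    ∫ x, φ x * laplaceGaussDensity lam v₁ x * gaussianPDFReal x v₂ z
      = ∫ s, laplacePDFReal lam s
          * ∫ x, φ x * (gaussianPDFReal s v₁ x * gaussianPDFReal x v₂ z) := by
  set F : ℝ → ℝ → ℝ := fun x s =>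
    φ x * (laplacePDFReal lam s * gaussianPDFReal s v₁ x) * gaussianPDFReal x v₂ z
  have hF : Integrable (Function.uncurry F) (volume.prod volume) := by
    have hlapm := (continuous_laplacePDFReal lam).measurable
    refine (integrable_prod_mul_gaussianPDFReal (hφ.norm.const_mul (lam / 2)) v₁).mono'
      (by unfold F; fun_prop) (Eventually.of_forall fun p => ?_)
    simp only [F, Function.uncurry, norm_mul, norm_of_nonneg (laplacePDFReal_nonneg hlam _),
      norm_of_nonneg (gaussianPDFReal_nonneg _ _ _), gaussianPDFReal_comm p.2 v₁ p.1]
    have hrest : 0 ≤ ‖φ p.1‖ * gaussianPDFReal p.1 v₁ p.2 * gaussianPDFReal p.1 v₂ z :=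
      mul_nonneg (mul_nonneg (norm_nonneg _) (gaussianPDFReal_nonneg _ _ _))
        (gaussianPDFReal_nonneg _ _ _)
    calc _ = ‖φ p.1‖ * gaussianPDFReal p.1 v₁ p.2 * gaussianPDFReal p.1 v₂ z
          * laplacePDFReal lam p.2 := by ring
      _ ≤ ‖φ p.1‖ * gaussianPDFReal p.1 v₁ p.2 * gaussianPDFReal p.1 v₂ z * (lam / 2) :=
          mul_le_mul_of_nonneg_left (laplacePDFReal_le hlam _) hrest
      _ = _ := by ring
  calc ∫ x, φ x * laplaceGaussDensity lam v₁ x * gaussianPDFReal x v₂ z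
      = ∫ x, ∫ s, F x s := by
        refine integral_congr_ae (Eventually.of_forall fun x => ?_)
        simp only [F, ← integral_laplacePDFReal_mul_gaussianPDFReal hlam hv₁, ← integral_mul_const,
          ← integral_const_mul]
    _ = ∫ s, ∫ x, F x s := integral_integral_swap hF
    _ = _ := by
        refine integral_congr_ae (Eventually.of_forall fun s => ?_)
        simp only [F, ← integral_const_mul]
        congr 1 with x
        ring

lemma integral_laplaceGaussDensity_mul_gaussianPDFReal (hlam : 0 ≤ lam) (hv₁ : v₁ ≠ 0)
    (hv₂ : v₂ ≠ 0) (z : ℝ) :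
    ∫ x, laplaceGaussDensity lam v₁ x * gaussianPDFReal x v₂ z
      = laplaceGaussDensity lam ↑(v₁ + v₂) z := by
  have hlik : Integrable fun x => 1 * gaussianPDFReal x v₂ z := by
    simpa only [one_mul, gaussianPDFReal_comm _ v₂ z] using integrable_gaussianPDFReal z v₂
  simpa only [one_mul, integral_gaussianPDFReal_mul_gaussianPDFReal hv₁ hv₂,
    integral_laplacePDFReal_mul_gaussianPDFReal hlam (by positivity : v₁ + v₂ ≠ 0)] using
    integral_mul_laplaceGaussDensity_mul_gaussianPDFReal_swap hlam hv₁ measurable_const hlik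

lemma integral_id_mul_laplaceGaussDensity_mul_gaussianPDFReal (hlam : 0 ≤ lam) (hv₁ : v₁ ≠ 0)
    (hv₂ : v₂ ≠ 0) (z : ℝ) :
    ∫ x, x * laplaceGaussDensity lam v₁ x * gaussianPDFReal x v₂ z
      = lam / 2 * (z * (gaussLaplaceIoi lam ↑(v₁ + v₂) z + gaussLaplaceIoi lam ↑(v₁ + v₂) (-z))
          + lam * v₂
            * (gaussLaplaceIoi lam ↑(v₁ + v₂) (-z) - gaussLaplaceIoi lam ↑(v₁ + v₂) z)) := by
  have hσ : v₁ + v₂ ≠ 0 := by positivity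
  have hlik : Integrable fun x => x * gaussianPDFReal x v₂ z := by
    simpa only [gaussianPDFReal_comm _ v₂ z] using integrable_mul_gaussianPDFReal z v₂
  have hsplit (s : ℝ) :
      laplacePDFReal lam s * ((v₂ * s + v₁ * z) / (v₁ + v₂) * gaussianPDFReal s (v₁ + v₂) z)
        = v₂ / (v₁ + v₂) * (s * (laplacePDFReal lam s * gaussianPDFReal s (v₁ + v₂) z))
          + v₁ * z / (v₁ + v₂) * (laplacePDFReal lam s * gaussianPDFReal s (v₁ + v₂) z) := by
    ring
  rw [integral_mul_laplaceGaussDensity_mul_gaussianPDFReal_swap hlam hv₁ measurable_id' hlik]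
  simp_rw [integral_mul_gaussianPDFReal_mul_gaussianPDFReal hv₁ hv₂, hsplit]
  rw [integral_add ((integrable_mul_laplacePDFReal_mul_gaussianPDFReal hlam _ z).const_mul _)
    ((integrable_laplacePDFReal_mul_gaussianPDFReal hlam _ z).const_mul _), integral_const_mul,
    integral_const_mul, integral_mul_laplacePDFReal_mul_gaussianPDFReal hlam hσ,
    integral_laplacePDFReal_mul_gaussianPDFReal hlam hσ, laplaceGaussDensity_eq]
  have hσpos : (0 : ℝ) < v₁ + v₂ := by positivity
  push_cast
  field_simp
  ring

end Posterior

lemma erfcx_eq_gaussLaplaceIoi {σ : ℝ} (hσ : 0 < σ) (lam z : ℝ) :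
    erfcx ((-z + lam * σ) / √(2 * σ)) = 2 * exp (z ^ 2 / (2 * σ)) * gaussLaplaceIoi lam σ z := by
  have harg : √2 * ((-z + lam * σ) / √(2 * σ)) = (lam * σ - z) / √σ := by
    rw [sqrt_mul zero_le_two]
    field_simp
    ring
  have hsq : ((-z + lam * σ) / √(2 * σ)) ^ 2 = z ^ 2 / (2 * σ) + (lam ^ 2 * σ / 2 - lam * z) := by
    rw [div_pow, sq_sqrt (by positivity)]
    field_simp
    ring
  rw [erfcx, erfc, harg, hsq, exp_add, gaussLaplaceIoi]
  ring

lemma etaFun_eq (lam NT τ z : ℝ) (hσ : 0 < NT + τ) :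
    etaFun lam NT τ z
      = (gaussLaplaceIoi lam (NT + τ) (-z) - gaussLaplaceIoi lam (NT + τ) z)
        / (gaussLaplaceIoi lam (NT + τ) z + gaussLaplaceIoi lam (NT + τ) (-z)) := by
  have hα := erfcx_eq_gaussLaplaceIoi hσ lam (-z)
  rw [neg_neg, neg_sq] at hα
  rw [etaFun, hα, erfcx_eq_gaussLaplaceIoi hσ, ← mul_sub, ← mul_add,
    mul_div_mul_left _ _ (by positivity), add_comm (gaussLaplaceIoi lam (NT + τ) (-z))]

end LaplaceGaussPosterior

open LaplaceGaussPosterior in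
/-- The conditional expectation `E[X | X + Z = ẑ]` is expressed as the ratio of the two defining
integrals against the densities. -/
theorem posterior_mean_laplace_gaussian (lam NT τ : ℝ) (hlam : 0 < lam) (hNT : 0 < NT)
    (hτ : 0 < τ) (zhat : ℝ) :
    (∫ x : ℝ, x * laplaceGaussDensity lam NT x *
        ((Real.sqrt (2 * Real.pi * τ))⁻¹ * Real.exp (-((zhat - x) ^ 2) / (2 * τ))))
      / (∫ x : ℝ, laplaceGaussDensity lam NT x *
        ((Real.sqrt (2 * Real.pi * τ))⁻¹ * Real.exp (-((zhat - x) ^ 2) / (2 * τ))))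
    = zhat + lam * τ * etaFun lam NT τ zhat := by
  lift NT to ℝ≥0 using hNT.le
  lift τ to ℝ≥0 using hτ.le
  have hNT' : NT ≠ 0 := by exact_mod_cast hNT.ne'
  have hτ' : τ ≠ 0 := by exact_mod_cast hτ.ne'
  change (∫ x, x * laplaceGaussDensity lam NT x * gaussianPDFReal x τ zhat)
      / (∫ x, laplaceGaussDensity lam NT x * gaussianPDFReal x τ zhat) = _
  rw [integral_id_mul_laplaceGaussDensity_mul_gaussianPDFReal hlam.le hNT' hτ',
    integral_laplaceGaussDensity_mul_gaussianPDFReal hlam.le hNT' hτ', laplaceGaussDensity_eq,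
    etaFun_eq _ _ _ _ (by positivity), NNReal.coe_add]
  have hG :=
    add_pos (gaussLaplaceIoi_pos lam (NT + τ) zhat) (gaussLaplaceIoi_pos lam (NT + τ) (-zhat))
  field_simp
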